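/- arXiv:0903.3182 — 5 statements merged into one kernel-verified Lean document; each statement's English description precedes it below -/
import Mathlib

section
/- Let N₁ be an n-bit NLFSR over GF(2) with state space (Fin n → ZMod 2) whose feedback functions satisfy: f_i(s) = s(i+1) for all i < τ (with 0 < τ ≤ n-1), f_τ(s) = s((τ+1) mod n) + g_τ(s) + p_τ(s), and f_i(s) = s((i+1) mod n) + g_i(s) for τ < i ≤ n-1, where each g_i and p_τ depend only on variables with index ≤ τ, none of the g_i depends on x_τ, and p_τ does not depend on x_0. Let N₂ be the NLFSR obtained by moving p_τ from bit τ to bit τ-1 with all variable indices decreased by 1 (i.e., N₂ has f'_τ(s) = s((τ+1) mod n) + g_τ(s), f'_{τ-1}(s) = s(τ) + p_τ|_{-1}(s), and f'_i = f_i otherwise, where p_τ|_{-1}(s) = p_τ(shift of s by +1 in indices)). Then for any state s, if N₁ starts at s and N₂ starts at the state r that equals s except r(τ) = s(τ) + p_τ|_{-1}(s), then for every t ≥ 0 the states reached after t steps by N₁ and N₂ agree on all bit positions except possibly position τ, and moreover the position-τ values again differ exactly by p_τ|_{-1} evaluated at the common state. -/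
/-- Shifting lemma (Lemma 1): moving the product-terms `p` from bit `τ` to bit `τ-1`
yields state sequences which differ in bit `τ` only, the difference being exactly
`p|₋₁` evaluated at the common state. -/
theorem stmt0 (n : ℕ) [NeZero n] (hn : 2 ≤ n) (τ : Fin n) (hτ : 0 < (τ : ℕ))
    (g : Fin n → (Fin n → ZMod 2) → ZMod 2)
    (p : (Fin n → ZMod 2) → ZMod 2)
    -- each `g i` (for i ≥ τ) depends only on variables with index ≤ τ and not on x_τ,
    -- i.e. only on indices < τ
    (hg : ∀ (i : Fin n), (τ : ℕ) ≤ (i : ℕ) →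
      ∀ s s' : Fin n → ZMod 2, (∀ k : Fin n, (k : ℕ) < (τ : ℕ) → s k = s' k) → g i s = g i s')
    -- `p` depends only on variables with index ≤ τ and not on x_0,
    -- i.e. only on indices in {1,…,τ}
    (hp : ∀ s s' : Fin n → ZMod 2,
      (∀ k : Fin n, 1 ≤ (k : ℕ) → (k : ℕ) ≤ (τ : ℕ) → s k = s' k) → p s = p s')
    (F₁ F₂ : (Fin n → ZMod 2) → (Fin n → ZMod 2))
    (hF₁ : ∀ s (i : Fin n), F₁ s i =
      if (i : ℕ) < (τ : ℕ) then s (i + 1)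
      else if i = τ then s (i + 1) + g τ s + p s
      else s (i + 1) + g i s)
    (hF₂ : ∀ s (i : Fin n), F₂ s i =
      if (i : ℕ) < (τ : ℕ) - 1 then s (i + 1)
      else if (i : ℕ) = (τ : ℕ) - 1 then s (i + 1) + p (fun k => s (k - 1))
      else if i = τ then s (i + 1) + g τ s
      else s (i + 1) + g i s)
    (s r : Fin n → ZMod 2)
    (hr : ∀ i : Fin n, i ≠ τ → r i = s i)
    (hrτ : r τ = s τ + p (fun k => s (k - 1))) :
    ∀ t : ℕ,
      (∀ i : Fin n, i ≠ τ → (F₁^[t] s) i = (F₂^[t] r) i) ∧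
      (F₂^[t] r) τ = (F₁^[t] s) τ + p (fun k => (F₁^[t] s) (k - 1)) := by
  have h1 : ((1:Fin n):ℕ) = 1 := by
    rw [Fin.val_one']; exact Nat.mod_eq_of_lt (by omega)
  have hadd : ∀ i : Fin n, (i:ℕ)+1 < n → ((i+1 : Fin n):ℕ) = (i:ℕ)+1 := by
    intro i h
    rw [Fin.add_def, h1]
    exact Nat.mod_eq_of_lt h
  have hsub : ∀ k : Fin n, 1 ≤ (k:ℕ) → ((k-1 : Fin n):ℕ) = (k:ℕ)-1 := by
    intro k h
    rw [Fin.sub_def, h1]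
    have hk := k.isLt
    show (n - 1 + (k:ℕ)) % n = (k:ℕ) - 1
    rw [Nat.add_comm, show (k:ℕ) + (n-1) = ((k:ℕ)-1) + n by omega,
      Nat.add_mod_right]
    exact Nat.mod_eq_of_lt (by omega)
  have hτn := τ.isLt
  -- the shifted `p` depends only on indices < τ
  have hpshift : ∀ a b : Fin n → ZMod 2,
      (∀ k : Fin n, (k:ℕ) < (τ:ℕ) → a k = b k) →
      p (fun k => a (k - 1)) = p (fun k => b (k - 1)) := by
    intro a b hab
    apply hp
    intro k hk1 hk2
    apply hab
    rw [hsub k hk1]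
    omega
  -- the key one-step lemma
  have key : ∀ s r : Fin n → ZMod 2,
      (∀ i : Fin n, i ≠ τ → r i = s i) →
      r τ = s τ + p (fun k => s (k - 1)) →
      (∀ i : Fin n, i ≠ τ → (F₁ s) i = (F₂ r) i) ∧
      (F₂ r) τ = (F₁ s) τ + p (fun k => (F₁ s) (k - 1)) := by
    intro s r hr hrτ
    have hrlt : ∀ k : Fin n, (k:ℕ) < (τ:ℕ) → r k = s k := by
      intro k hk
      exact hr k (by intro h; rw [h] at hk; omega)
    -- `p (shift (F₁ s)) = p s`
    have hpF : p (fun k => (F₁ s) (k - 1)) = p s := by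
      apply hp
      intro k hk1 hk2
      rw [hF₁]
      rw [if_pos (by rw [hsub k hk1]; omega)]
      rw [sub_add_cancel]
    -- τ+1 ≠ τ
    have hsucc_ne : ∀ i : Fin n, (τ:ℕ) ≤ (i:ℕ) → i + 1 ≠ τ := by
      intro i hi h
      by_cases hlast : (i:ℕ)+1 < n
      · have := hadd i hlast
        rw [h] at this
        omega
      · have hi' : (i:ℕ) = n - 1 := by omega
        have : ((i+1 : Fin n):ℕ) = 0 := by
          rw [Fin.add_def, h1, hi']
          simp [Nat.sub_add_cancel (by omega : 1 ≤ n)]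
        rw [h] at this
        omega
    constructor
    · intro i hi
      rw [hF₁, hF₂]
      rcases lt_trichotomy ((i:ℕ)) ((τ:ℕ)) with hlt | heq | hgt
      · rw [if_pos hlt]
        by_cases h2 : (i:ℕ) < (τ:ℕ) - 1
        · rw [if_pos h2, hr]
          intro h
          have := hadd i (by omega)
          rw [h] at this; omega
        · have h3 : (i:ℕ) = (τ:ℕ) - 1 := by omega
          rw [if_neg h2, if_pos h3]
          have hiv : ((i+1 : Fin n):ℕ) = (τ:ℕ) := by
            rw [hadd i (by omega)]; omega
          have hip : i + 1 = τ := Fin.ext hiv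
          have htwo : ∀ x : ZMod 2, x + x = 0 := by decide
          rw [hip, hrτ, hpshift _ s hrlt, add_assoc, htwo, add_zero]
      · exact absurd (Fin.ext heq) hi
      · have hne : ¬ (i:ℕ) < (τ:ℕ) := by omega
        rw [if_neg hne, if_neg hi, if_neg (by omega), if_neg (by omega), if_neg hi]
        rw [hr _ (hsucc_ne i (by omega)), hg i (by omega) r s hrlt]
    · have htwo : ∀ x : ZMod 2, x + x = 0 := by decide
      rw [hF₁, hF₂, if_neg (show ¬(τ:ℕ) < (τ:ℕ)-1 by omega),
        if_neg (show ¬(τ:ℕ) = (τ:ℕ)-1 by omega), if_pos rfl,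
        if_neg (show ¬(τ:ℕ) < (τ:ℕ) by omega), if_pos rfl,
        hpF, hr _ (hsucc_ne τ le_rfl), hg τ le_rfl r s hrlt,
        add_assoc (s (τ+1) + g τ s), htwo, add_zero]
  intro t
  induction t with
  | zero => exact ⟨fun i hi => (hr i hi).symm, hrτ⟩
  | succ t ih =>
    rw [Function.iterate_succ_apply', Function.iterate_succ_apply']
    exact key _ _ (fun i hi => (ih.1 i hi).symm) ih.2
end

section
/- Under the same hypotheses as the shifting lemma (N₁ uniform with terminal bit τ, 0 < τ ≤ n-1, f_τ = x_{(τ+1) mod n} + g_τ + p_τ, and N₂ obtained by shifting the product-terms p_τ from bit τ to bit τ-1, with uniformity preserved), if N₁ is initialized to s and N₂ is initialized to the state agreeing with s everywhere except bit τ, where it has value s_τ + p_τ|_{-1}(s), then N₁ and N₂ produce identical output sequences, i.e., for all t ≥ 0 the 0th bit of F₁^[t](s) equals the 0th bit of F₂^[t](r). -/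
/-- Lemma 2: under the shifting hypotheses, the NLFSR before shifting started at `s`
and the NLFSR after shifting started at the matching state `r`
(with `r τ = s τ + p|₋₁(s)`) generate the same output sequence. -/
theorem stmt1 (n : ℕ) [NeZero n] (hn : 2 ≤ n) (τ : Fin n) (hτ : 0 < (τ : ℕ))
    (g : Fin n → (Fin n → ZMod 2) → ZMod 2)
    (p : (Fin n → ZMod 2) → ZMod 2)
    (hg : ∀ (i : Fin n), (τ : ℕ) ≤ (i : ℕ) →
      ∀ s s' : Fin n → ZMod 2, (∀ k : Fin n, (k : ℕ) < (τ : ℕ) → s k = s' k) → g i s = g i s')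
    (hp : ∀ s s' : Fin n → ZMod 2,
      (∀ k : Fin n, 1 ≤ (k : ℕ) → (k : ℕ) ≤ (τ : ℕ) → s k = s' k) → p s = p s')
    (F₁ F₂ : (Fin n → ZMod 2) → (Fin n → ZMod 2))
    (hF₁ : ∀ s (i : Fin n), F₁ s i =
      if (i : ℕ) < (τ : ℕ) then s (i + 1)
      else if i = τ then s (i + 1) + g τ s + p s
      else s (i + 1) + g i s)
    (hF₂ : ∀ s (i : Fin n), F₂ s i =
      if (i : ℕ) < (τ : ℕ) - 1 then s (i + 1)
      else if (i : ℕ) = (τ : ℕ) - 1 then s (i + 1) + p (fun k => s (k - 1))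
      else if i = τ then s (i + 1) + g τ s
      else s (i + 1) + g i s)
    (s r : Fin n → ZMod 2)
    (hr : ∀ i : Fin n, i ≠ τ → r i = s i)
    (hrτ : r τ = s τ + p (fun k => s (k - 1))) :
    ∀ t : ℕ, (F₁^[t] s) 0 = (F₂^[t] r) 0 := by

  have hτn : (τ:ℕ) < n := τ.isLt
  have h1 : ((1:Fin n):ℕ) = 1 := by
    rw [Fin.val_one']; exact Nat.mod_eq_of_lt (by omega)
  have hadd : ∀ i : Fin n, (i:ℕ) + 1 < n → ((i+1:Fin n):ℕ) = (i:ℕ)+1 := by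
    intro i hi
    rw [Fin.add_def, h1]; exact Nat.mod_eq_of_lt hi
  have haddtop : ∀ i : Fin n, (i:ℕ) + 1 = n → ((i+1:Fin n):ℕ) = 0 := by
    intro i hi
    rw [Fin.add_def, h1, hi]; simp
  have hsub : ∀ k : Fin n, 1 ≤ (k:ℕ) → ((k-1:Fin n):ℕ) = (k:ℕ) - 1 := by
    intro k hk
    rw [Fin.sub_def, h1]
    have h2 : (n - 1) + (k:ℕ) = ((k:ℕ) - 1) + 1 * n := by omega
    show ((n - 1) + (k:ℕ)) % n = (k:ℕ) - 1
    rw [h2, Nat.add_mul_mod_self_right]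
    exact Nat.mod_eq_of_lt (by omega)
  have hne : ∀ i : Fin n, (i:ℕ) ≠ (τ:ℕ) → i ≠ τ := fun i h h' => h (by rw [h'])
  have cancel : ∀ x y : ZMod 2, x + y + y = x := by decide
  suffices H : ∀ t, (∀ i : Fin n, i ≠ τ → F₂^[t] r i = F₁^[t] s i) ∧
      F₂^[t] r τ = F₁^[t] s τ + p (fun k => F₁^[t] s (k-1)) by
    intro t
    refine ((H t).1 0 ?_).symm
    intro h
    rw [← h, Fin.val_zero] at hτ
    exact lt_irrefl 0 hτ
  intro t
  induction t with
  | zero => exact ⟨hr, hrτ⟩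
  | succ t ih =>
    obtain ⟨ih1, ih2⟩ := ih
    set a := F₁^[t] s with ha
    set b := F₂^[t] r with hb
    have hstep1 : F₁^[t+1] s = F₁ a := Function.iterate_succ_apply' F₁ t s
    have hstep2 : F₂^[t+1] r = F₂ b := Function.iterate_succ_apply' F₂ t r
    have hagree : ∀ k : Fin n, (k:ℕ) < (τ:ℕ) → b k = a k :=
      fun k hk => ih1 k (hne k (by omega))
    have hpb : p (fun k => b (k-1)) = p (fun k => a (k-1)) := by
      apply hp
      intro k hk1 hk2
      exact ih1 _ (hne _ (by rw [hsub k hk1]; omega))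
    have hpa : p (fun k => F₁ a (k-1)) = p a := by
      apply hp
      intro k hk1 hk2
      have hkv : ((k-1:Fin n):ℕ) = (k:ℕ)-1 := hsub k hk1
      rw [hF₁, if_pos (by omega : ((k-1:Fin n):ℕ) < (τ:ℕ))]
      congr 1
      exact sub_add_cancel k 1
    have hτ1 : (τ+1 : Fin n) ≠ τ := by
      apply hne
      by_cases hc : (τ:ℕ)+1 < n
      · rw [hadd τ hc]; omega
      · rw [haddtop τ (by omega)]; omega
    rw [hstep1, hstep2]
    constructor
    · intro i hi
      have hiv : (i:ℕ) ≠ (τ:ℕ) := fun h => hi (Fin.ext h)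
      rw [hF₂, hF₁]
      by_cases hA : (i:ℕ) < (τ:ℕ) - 1
      · rw [if_pos hA, if_pos (by omega)]
        exact ih1 _ (hne _ (by rw [hadd i (by omega)]; omega))
      · by_cases hB : (i:ℕ) = (τ:ℕ) - 1
        · rw [if_neg hA, if_pos hB, if_pos (by omega)]
          have hi1 : (i+1:Fin n) = τ := Fin.ext (by rw [hadd i (by omega)]; omega)
          rw [hi1, ih2, hpb]
          exact cancel _ _
        · have hC : (τ:ℕ) < (i:ℕ) := by omega
          rw [if_neg hA, if_neg hB, if_neg hi, if_neg (by omega : ¬ (i:ℕ) < (τ:ℕ)), if_neg hi]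
          have hi1ne : (i+1:Fin n) ≠ τ := by
            apply hne
            by_cases hc : (i:ℕ)+1 < n
            · rw [hadd i hc]; omega
            · rw [haddtop i (by omega)]; omega
          rw [ih1 _ hi1ne, hg i (by omega) b a hagree]
    · rw [hF₂, hF₁, hpa]
      rw [if_neg (by omega : ¬ (τ:ℕ) < (τ:ℕ) - 1),
          if_neg (by omega : ¬ (τ:ℕ) = (τ:ℕ) - 1), if_pos rfl,
          if_neg (lt_irrefl _), if_pos rfl]
      rw [ih1 _ hτ1, hg τ le_rfl b a hagree]
      exact (cancel _ _).symm
end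

section
/- Let N_F be the n-bit Fibonacci NLFSR with feedback functions f_{n-1} = x_0 + g_{n-1} + g_{n-2}|_{+1} + g_{n-3}|_{+2} + … + g_τ|_{+n-1-τ} and f_i = x_{i+1} for i < n-1, and let N_G be the uniform Galois NLFSR with terminal bit τ (0 ≤ τ < n-1) and feedback functions f_i = x_{(i+1) mod n} + g_i for τ ≤ i ≤ n-1 and f_i = x_{i+1} for i < τ, where each g_i depends only on variables with indices in {0,…,τ} and does not involve x_0 for i < n-1 (so that all intermediate shiftings preserve uniformity). If N_F is initialized to s = (s_0,…,s_{n-1}) and N_G is initialized to the state (s_0,…,s_τ, r_{τ+1},…,r_{n-1}) with r_i = s_i + g_{i-1}(s) + g_{i-2}|_{+1}(s) + … + g_τ|_{+i-τ-1}(s) for each i ∈ {τ+1,…,n-1}, then N_F and N_G generate the same output sequence: for all t ≥ 0 the 0th bits of the t-th states coincide. -/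
/-!
Let `Φ` add to every bit `i > τ` of a Fibonacci state the partial feedback
`g_τ|_{+(i-1-τ)} + … + g_{i-1}`, so that `r = Φ s`. Each `g_j` reads only bits `≤ τ`, which a
Fibonacci step merely shifts, so the partial feedback at bit `i` of the stepped state is the one at
bit `i + 1` of the old state plus `g_i`; this is exactly the Galois update, and at the last bit the
full Fibonacci feedback cancels against the partial sum in characteristic two. Hence
`Φ ∘ F_F = F_G ∘ Φ`, and since `Φ` fixes bit `0`, the outputs agree.
-/

open Finset Function

namespace NLFSR

variable {n : ℕ} [NeZero n] {τ : ℕ} {g : ℕ → (Fin n → ZMod 2) → ZMod 2}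

/-- `g|_{+m} = g ∘ shift m`. -/
def shift (m : ℕ) (v : Fin n → ZMod 2) : Fin n → ZMod 2 :=
  fun k => v (k + Fin.ofNat n m)

/-- `g_τ|_{+(a-τ)} + … + g_a|_{+0}`. -/
def feedbackSum (τ : ℕ) (g : ℕ → (Fin n → ZMod 2) → ZMod 2) (a : ℕ) (v : Fin n → ZMod 2) :
    ZMod 2 :=
  ∑ j ∈ Icc τ a, g j (shift (a - j) v)

def fibonacciStep (τ : ℕ) (g : ℕ → (Fin n → ZMod 2) → ZMod 2) (v : Fin n → ZMod 2) :
    Fin n → ZMod 2 :=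
  fun i => if (i : ℕ) = n - 1 then v 0 + feedbackSum τ g (n - 1) v else v (i + 1)

def galoisStep (τ : ℕ) (g : ℕ → (Fin n → ZMod 2) → ZMod 2) (v : Fin n → ZMod 2) :
    Fin n → ZMod 2 :=
  fun i => if τ ≤ (i : ℕ) then v (i + 1) + g i v else v (i + 1)

def galoisOfFibonacci (τ : ℕ) (g : ℕ → (Fin n → ZMod 2) → ZMod 2) (v : Fin n → ZMod 2) :
    Fin n → ZMod 2 :=
  fun i => if (i : ℕ) ≤ τ then v i else v i + feedbackSum τ g (i - 1) v

lemma fibonacciStep_of_ne {i : Fin n} (h : (i : ℕ) ≠ n - 1) (v : Fin n → ZMod 2) :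
    fibonacciStep τ g v i = v (i + 1) :=
  if_neg h

lemma fibonacciStep_of_eq {i : Fin n} (h : (i : ℕ) = n - 1) (v : Fin n → ZMod 2) :
    fibonacciStep τ g v i = v 0 + feedbackSum τ g (n - 1) v :=
  if_pos h

lemma galoisStep_of_lt {i : Fin n} (h : (i : ℕ) < τ) (v : Fin n → ZMod 2) :
    galoisStep τ g v i = v (i + 1) :=
  if_neg (by omega)

lemma galoisStep_of_le {i : Fin n} (h : τ ≤ (i : ℕ)) (v : Fin n → ZMod 2) :
    galoisStep τ g v i = v (i + 1) + g i v :=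
  if_pos h

lemma val_add_ofNat {k : Fin n} {m : ℕ} (h : (k : ℕ) + m < n) :
    ((k + Fin.ofNat n m : Fin n) : ℕ) = k + m := by
  have hm : m < n := by omega
  rw [Fin.val_add, Fin.val_ofNat, Nat.mod_eq_of_lt hm, Nat.mod_eq_of_lt h]

lemma add_one_eq_zero_of_val_eq {i : Fin n} (h : (i : ℕ) = n - 1) : i + 1 = 0 :=
  Fin.ext (by simp [Fin.val_add, h, Nat.sub_add_cancel NeZero.one_le])

@[simp]
lemma shift_zero (v : Fin n → ZMod 2) : shift 0 v = v := by
  funext k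
  simp [shift]

lemma feedbackSum_self (v : Fin n → ZMod 2) : feedbackSum τ g τ v = g τ v := by
  simp [feedbackSum]

lemma feedbackSum_succ {a : ℕ} (h : τ ≤ a + 1) (v : Fin n → ZMod 2) :
    feedbackSum τ g (a + 1) v = ∑ j ∈ Icc τ a, g j (shift (a + 1 - j) v) + g (a + 1) v := by
  rw [feedbackSum, sum_Icc_succ_top h, Nat.sub_self, shift_zero]

lemma shift_fibonacciStep_apply {m : ℕ} {k : Fin n} (h : (k : ℕ) + m < n - 1)
    (v : Fin n → ZMod 2) : shift m (fibonacciStep τ g v) k = shift (m + 1) v k := by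
  have hk : ((k + Fin.ofNat n m : Fin n) : ℕ) ≠ n - 1 := by
    rw [val_add_ofNat (by omega)]
    omega
  have hsucc : Fin.ofNat n (m + 1) = Fin.ofNat n m + 1 := by
    open Fin.NatCast in simp only [Fin.ofNat_eq_cast, Nat.cast_succ]
  simp only [shift]
  rw [fibonacciStep_of_ne hk, hsucc, add_assoc]

lemma feedbackSum_fibonacciStep (hg : ∀ j, DependsOn (g j) {k : Fin n | (k : ℕ) ≤ τ})
    {i : ℕ} (hτi : τ < i) (hi : i < n) (v : Fin n → ZMod 2) :
    feedbackSum τ g (i - 1) (fibonacciStep τ g v) = feedbackSum τ g i v + g i v := by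
  obtain ⟨a, rfl⟩ : ∃ a, i = a + 1 := ⟨i - 1, by omega⟩
  have hshift : ∀ j ∈ Icc τ a,
      g j (shift (a - j) (fibonacciStep τ g v)) = g j (shift (a + 1 - j) v) := by
    intro j hj
    rw [mem_Icc] at hj
    refine hg j fun k (hk : (k : ℕ) ≤ τ) => ?_
    rw [shift_fibonacciStep_apply (by omega), Nat.sub_add_comm hj.2]
  rw [feedbackSum_succ (by omega), add_assoc, CharTwo.add_self_eq_zero, add_zero,
    Nat.add_sub_cancel, feedbackSum, sum_congr rfl hshift]

lemma galoisOfFibonacci_of_le {v : Fin n → ZMod 2} {i : Fin n} (h : (i : ℕ) ≤ τ) :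
    galoisOfFibonacci τ g v i = v i :=
  if_pos h

lemma galoisOfFibonacci_of_lt {v : Fin n → ZMod 2} {i : Fin n} (h : τ < i) :
    galoisOfFibonacci τ g v i = v i + feedbackSum τ g (i - 1) v :=
  if_neg (by omega)

lemma galoisOfFibonacci_zero (v : Fin n → ZMod 2) : galoisOfFibonacci τ g v 0 = v 0 :=
  galoisOfFibonacci_of_le (by simp)

lemma apply_galoisOfFibonacci {f : (Fin n → ZMod 2) → ZMod 2}
    (hf : DependsOn f {k : Fin n | (k : ℕ) ≤ τ}) (v : Fin n → ZMod 2) :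
    f (galoisOfFibonacci τ g v) = f v :=
  hf fun _ hk => galoisOfFibonacci_of_le hk

theorem semiconj_galoisOfFibonacci (hg : ∀ j, DependsOn (g j) {k : Fin n | (k : ℕ) ≤ τ})
    (hτ : τ < n - 1) :
    Semiconj (galoisOfFibonacci τ g) (fibonacciStep τ g) (galoisStep τ g) := by
  intro v
  funext i
  have hgΦ : g i (galoisOfFibonacci τ g v) = g i v := apply_galoisOfFibonacci (hg i) v
  rcases lt_trichotomy (i : ℕ) τ with hi | hi | hi
  · have hi1 : ((i + 1 : Fin n) : ℕ) = i + 1 := Fin.val_add_one_of_lt' (by omega)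
    rw [galoisStep_of_lt hi, galoisOfFibonacci_of_le hi.le, fibonacciStep_of_ne (by omega),
      galoisOfFibonacci_of_le (by omega)]
  · have hi1 : ((i + 1 : Fin n) : ℕ) = i + 1 := Fin.val_add_one_of_lt' (by omega)
    rw [galoisStep_of_le hi.ge, galoisOfFibonacci_of_le hi.le, fibonacciStep_of_ne (by omega),
      galoisOfFibonacci_of_lt (by omega), hgΦ, hi1, Nat.add_sub_cancel, hi, feedbackSum_self,
      add_assoc, CharTwo.add_self_eq_zero, add_zero]
  · rw [galoisStep_of_le hi.le, galoisOfFibonacci_of_lt hi, hgΦ,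
      feedbackSum_fibonacciStep hg hi i.is_lt]
    by_cases hlast : (i : ℕ) = n - 1
    · rw [fibonacciStep_of_eq hlast, add_one_eq_zero_of_val_eq hlast, galoisOfFibonacci_zero,
        ← hlast, add_assoc, ← add_assoc (feedbackSum τ g i v), CharTwo.add_self_eq_zero, zero_add]
    · have hi1 : ((i + 1 : Fin n) : ℕ) = i + 1 := Fin.val_add_one_of_lt' (by omega)
      rw [fibonacciStep_of_ne hlast, galoisOfFibonacci_of_lt (by omega), hi1,
        Nat.add_sub_cancel, add_assoc]

end NLFSR

open NLFSR in
theorem stmt2_general (n : ℕ) [NeZero n] (τ : ℕ) (hτ : τ < n - 1)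
    (g : ℕ → (Fin n → ZMod 2) → ZMod 2)
    -- each g_i depends only on variables with index ≤ τ
    (hg : ∀ (i : ℕ) (s s' : Fin n → ZMod 2),
      (∀ k : Fin n, (k : ℕ) ≤ τ → s k = s' k) → g i s = g i s')
    (F_F F_G : (Fin n → ZMod 2) → (Fin n → ZMod 2))
    -- Fibonacci: f_{n-1} = x_0 + g_{n-1} + g_{n-2}|_{+1} + … + g_τ|_{+n-1-τ},  f_i = x_{i+1}
    (hFF : ∀ s (i : Fin n), F_F s i =
      if (i : ℕ) = n - 1 then
        s 0 + ∑ j ∈ Finset.Icc τ (n - 1), g j (fun k => s (k + (Fin.ofNat n (n - 1 - j))))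
      else s (i + 1))
    -- Galois: f_i = x_{(i+1) mod n} + g_i for τ ≤ i,  f_i = x_{i+1} for i < τ
    (hFG : ∀ s (i : Fin n), F_G s i =
      if τ ≤ (i : ℕ) then s (i + 1) + g (i : ℕ) s else s (i + 1))
    (s r : Fin n → ZMod 2)
    (hr1 : ∀ i : Fin n, (i : ℕ) ≤ τ → r i = s i)
    (hr2 : ∀ i : Fin n, τ < (i : ℕ) →
      r i = s i + ∑ j ∈ Finset.Icc τ ((i : ℕ) - 1),
        g j (fun k => s (k + (Fin.ofNat n ((i : ℕ) - 1 - j))))) :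
    ∀ t : ℕ, (F_F^[t] s) 0 = (F_G^[t] r) 0 := by
  have hF : F_F = fibonacciStep τ g := funext fun v => funext (hFF v)
  have hG : F_G = galoisStep τ g := funext fun v => funext (hFG v)
  have hr : r = galoisOfFibonacci τ g s := funext fun i => by
    by_cases hi : (i : ℕ) ≤ τ
    · rw [hr1 i hi, galoisOfFibonacci_of_le hi]
    · rw [hr2 i (by omega), galoisOfFibonacci_of_lt (by omega)]
      rfl
  intro t
  subst hF hG hr
  rw [← (semiconj_galoisOfFibonacci (fun j x y => hg j x y) hτ).iterate_right t s,
    galoisOfFibonacci_zero]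

/-- Theorem 2: the Fibonacci NLFSR `N_F` started at `s` and the equivalent uniform
Galois NLFSR `N_G` (terminal bit `τ`) started at the matching state `r`
(`r i = s i + Σ_{j=τ}^{i-1} g_j|_{+(i-1-j)}(s)` for `i > τ`) generate the same
output sequence. `g|_{+m}(s) = g (fun k => s (k + m))`. -/
theorem stmt2 (n : ℕ) [NeZero n] (hn : 2 ≤ n) (τ : ℕ) (hτ : τ < n - 1)
    (g : ℕ → (Fin n → ZMod 2) → ZMod 2)
    -- each g_i depends only on variables with index ≤ τ
    (hg : ∀ (i : ℕ) (s s' : Fin n → ZMod 2),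
      (∀ k : Fin n, (k : ℕ) ≤ τ → s k = s' k) → g i s = g i s')
    -- and g_i for i < n-1 does not involve x_0
    (hg0 : ∀ (i : ℕ), i < n - 1 → ∀ s s' : Fin n → ZMod 2,
      (∀ k : Fin n, 1 ≤ (k : ℕ) → s k = s' k) → g i s = g i s')
    (F_F F_G : (Fin n → ZMod 2) → (Fin n → ZMod 2))
    -- Fibonacci: f_{n-1} = x_0 + g_{n-1} + g_{n-2}|_{+1} + … + g_τ|_{+n-1-τ},  f_i = x_{i+1}
    (hFF : ∀ s (i : Fin n), F_F s i =
      if (i : ℕ) = n - 1 then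
        s 0 + ∑ j ∈ Finset.Icc τ (n - 1), g j (fun k => s (k + (Fin.ofNat n (n - 1 - j))))
      else s (i + 1))
    -- Galois: f_i = x_{(i+1) mod n} + g_i for τ ≤ i,  f_i = x_{i+1} for i < τ
    (hFG : ∀ s (i : Fin n), F_G s i =
      if τ ≤ (i : ℕ) then s (i + 1) + g (i : ℕ) s else s (i + 1))
    (s r : Fin n → ZMod 2)
    (hr1 : ∀ i : Fin n, (i : ℕ) ≤ τ → r i = s i)
    (hr2 : ∀ i : Fin n, τ < (i : ℕ) →
      r i = s i + ∑ j ∈ Finset.Icc τ ((i : ℕ) - 1),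
        g j (fun k => s (k + (Fin.ofNat n ((i : ℕ) - 1 - j))))) :
    ∀ t : ℕ, (F_F^[t] s) 0 = (F_G^[t] r) 0 :=
  stmt2_general n τ hτ g hg F_F F_G hFF hFG s r hr1 hr2
end

section
/- Let F₁ be the update map of the 4-bit NLFSR with f₃ = x₀ + x₁, f₂ = x₃ + x₁ + x₀x₁, f₁ = x₂, f₀ = x₁, and let F₂ be the update map with f₃ = x₀ + x₁, f₂ = x₃ + x₀x₁, f₁ = x₂ + x₀, f₀ = x₁ (obtained by shifting the product-term x₁ from bit 2 to bit 1). Define φ : (ZMod 2)⁴ → (ZMod 2)⁴ by φ(x₀,x₁,x₂,x₃) = (x₀, x₁, x₂ + x₀, x₃). Then φ ∘ F₁ = F₂ ∘ φ, i.e., φ conjugates the dynamics of N₁ into those of N₂. -/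
/-- N₁: f₀ = x₁, f₁ = x₂, f₂ = x₃ + x₁ + x₀x₁, f₃ = x₀ + x₁. -/
def F₁ : ZMod 2 × ZMod 2 × ZMod 2 × ZMod 2 → ZMod 2 × ZMod 2 × ZMod 2 × ZMod 2 :=
  fun s => (s.2.1, s.2.2.1, s.2.2.2 + s.2.1 + s.1 * s.2.1, s.1 + s.2.1)

/-- N₂: f₀ = x₁, f₁ = x₂ + x₀, f₂ = x₃ + x₀x₁, f₃ = x₀ + x₁. -/
def F₂ : ZMod 2 × ZMod 2 × ZMod 2 × ZMod 2 → ZMod 2 × ZMod 2 × ZMod 2 × ZMod 2 :=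
  fun s => (s.2.1, s.2.2.1 + s.1, s.2.2.2 + s.1 * s.2.1, s.1 + s.2.1)

/-- The state correspondence `φ(x₀,x₁,x₂,x₃) = (x₀,x₁,x₂+x₀,x₃)`. -/
def φ : ZMod 2 × ZMod 2 × ZMod 2 × ZMod 2 → ZMod 2 × ZMod 2 × ZMod 2 × ZMod 2 :=
  fun s => (s.1, s.2.1, s.2.2.1 + s.1, s.2.2.2)

/-- `φ` conjugates the dynamics of N₁ into those of N₂. -/
theorem stmt5 : φ ∘ F₁ = F₂ ∘ φ := by
  funext s
  obtain ⟨a,b,c,d⟩ := s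
  simp only [Function.comp, F₁, F₂, φ, Prod.mk.injEq]
  have h2 : (2 : ZMod 2) = 0 := rfl
  refine ⟨trivial, by ring_nf; rw [h2]; ring, by ring_nf; rw [h2]; ring, trivial⟩
end

section
/- Let F₁, F₂, F₃ be the update maps on (ZMod 2)⁴ given by: F₁: f₃ = x₀ + x₁, f₂ = x₃ + x₁ + x₀x₁, f₁ = x₂, f₀ = x₁; F₂: f₃ = x₀ + x₁, f₂ = x₃ + x₀x₁, f₁ = x₂ + x₀, f₀ = x₁; F₃: f₃ = x₀ + x₁ + x₂ + x₁x₂, f₂ = x₃, f₁ = x₂, f₀ = x₁. Then for the common initial state s = (x₀,x₁,x₂,x₃) = (0,0,0,1), the output sequences agree: for all t ≥ 0, the 0th coordinates of F₁^[t](s), F₂^[t](s), and F₃^[t](s) are equal. -/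
/-- N₃ (Fibonacci): f₀ = x₁, f₁ = x₂, f₂ = x₃, f₃ = x₀ + x₁ + x₂ + x₁x₂. -/
def F₃ : ZMod 2 × ZMod 2 × ZMod 2 × ZMod 2 → ZMod 2 × ZMod 2 × ZMod 2 × ZMod 2 :=
  fun s => (s.2.1, s.2.2.1, s.2.2.2, s.1 + s.2.1 + s.2.2.1 + s.2.1 * s.2.2.1)

lemma iter15 (F : ZMod 2 × ZMod 2 × ZMod 2 × ZMod 2 → ZMod 2 × ZMod 2 × ZMod 2 × ZMod 2)
    (s : ZMod 2 × ZMod 2 × ZMod 2 × ZMod 2) (h : F^[15] s = s) (k : ℕ) :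
    F^[15 * k] s = s := by
  induction k with
  | zero => simp
  | succ k ih =>
      have : 15 * (k + 1) = 15 * k + 15 := by ring
      rw [this, Function.iterate_add_apply, h, ih]

lemma reduce (F : ZMod 2 × ZMod 2 × ZMod 2 × ZMod 2 → ZMod 2 × ZMod 2 × ZMod 2 × ZMod 2)
    (s : ZMod 2 × ZMod 2 × ZMod 2 × ZMod 2) (h : F^[15] s = s) (t : ℕ) :
    F^[t] s = F^[t % 15] s := by
  conv_lhs => rw [← Nat.mod_add_div t 15, Function.iterate_add_apply,
    iter15 F s h (t / 15)]

/-- Started from the common initial state `(x₀,x₁,x₂,x₃) = (0,0,0,1)`, the three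
equivalent NLFSRs N₁, N₂, N₃ produce identical output sequences. -/
theorem stmt8 :
    ∀ t : ℕ,
      (F₁^[t] ((0, 0, 0, 1) : ZMod 2 × ZMod 2 × ZMod 2 × ZMod 2)).1 =
        (F₂^[t] ((0, 0, 0, 1) : ZMod 2 × ZMod 2 × ZMod 2 × ZMod 2)).1 ∧
      (F₁^[t] ((0, 0, 0, 1) : ZMod 2 × ZMod 2 × ZMod 2 × ZMod 2)).1 =
        (F₃^[t] ((0, 0, 0, 1) : ZMod 2 × ZMod 2 × ZMod 2 × ZMod 2)).1 := by
  intro t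
  have h1 : F₁^[15] ((0, 0, 0, 1) : ZMod 2 × ZMod 2 × ZMod 2 × ZMod 2) = (0, 0, 0, 1) := by
    decide
  have h2 : F₂^[15] ((0, 0, 0, 1) : ZMod 2 × ZMod 2 × ZMod 2 × ZMod 2) = (0, 0, 0, 1) := by
    decide
  have h3 : F₃^[15] ((0, 0, 0, 1) : ZMod 2 × ZMod 2 × ZMod 2 × ZMod 2) = (0, 0, 0, 1) := by
    decide
  rw [reduce F₁ _ h1, reduce F₂ _ h2, reduce F₃ _ h3]
  have hlt : t % 15 < 15 := Nat.mod_lt _ (by norm_num)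
  set r := t % 15 with hr
  interval_cases r <;> exact ⟨by decide, by decide⟩
end
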